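/- arXiv:2309.16156 — 5 statements merged into one kernel-verified Lean document; each statement's English description precedes it below -/
import Mathlib

section
/- Let G be a finite connected simple graph on n vertices with distance matrix D, and let w ∈ ℝⁿ be an entrywise nonnegative vector with D w = n·𝟏. Then for every vertex u of G, the entry of w at u satisfies w(u) ≤ (1/2)·‖w‖₁. -/
/-!
Let `u` be a vertex and `v` a neighbour of `u`. Walking from `u` to `v` shortens the distance to
any vertex by at most one, and lengthens the distance to `u` itself by one. Weighting these
pointwise inequalities by `w ≥ 0` and summing gives
`(D w)(u) + 2 w(u) ≤ (D w)(v) + ‖w‖₁`; since `D w` is constant, `2 w(u) ≤ ‖w‖₁`.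
A neighbour exists because `D w = n·𝟏 ≠ 0` rules out the one-vertex graph.
-/

open Finset

namespace SimpleGraph

variable {V : Type*} {G : SimpleGraph V} {u v : V}

lemma Adj.dist_le_dist_add_one (h : G.Adj u v) (x : V) : G.dist u x ≤ G.dist v x + 1 := by
  have := h.reachable.dist_triangle_left x
  rw [dist_eq_one_iff_adj.mpr h] at this
  omega

lemma Adj.dist_add_ite_le [DecidableEq V] (h : G.Adj u v) (x : V) :
    (G.dist u x : ℝ) + (if x = u then 2 else 0) ≤ G.dist v x + 1 := by
  by_cases hx : x = u
  · subst hx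
    norm_num [dist_eq_one_iff_adj.mpr h.symm]
  · simp only [hx, if_false, add_zero]
    exact_mod_cast h.dist_le_dist_add_one x

lemma Adj.sum_dist_mul_add_two_mul_le [Fintype V] (h : G.Adj u v) {w : V → ℝ} (hw : 0 ≤ w) :
    ∑ x, G.dist u x * w x + 2 * w u ≤ ∑ x, G.dist v x * w x + ∑ x, w x := by
  classical
  calc ∑ x, G.dist u x * w x + 2 * w u
      = ∑ x, ((G.dist u x : ℝ) + if x = u then 2 else 0) * w x := by
        simp [add_mul, sum_add_distrib, ite_mul]
    _ ≤ ∑ x, ((G.dist v x : ℝ) + 1) * w x :=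
        sum_le_sum fun x _ => mul_le_mul_of_nonneg_right (h.dist_add_ite_le x) (hw x)
    _ = ∑ x, G.dist v x * w x + ∑ x, w x := by
        simp [add_mul, sum_add_distrib]

end SimpleGraph

/-- If `G` is a finite connected simple graph on `n` vertices with distance
matrix `D` and `w ≥ 0` satisfies `D w = n·𝟏`, then every entry of `w` is at most
half of `‖w‖₁`. -/
theorem stmt_2 {V : Type*} [Fintype V] (G : SimpleGraph V) (hG : G.Connected)
    (D : Matrix V V ℝ) (hD : ∀ a b, D a b = (G.dist a b : ℝ))
    (w : V → ℝ) (hw0 : ∀ i, 0 ≤ w i)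
    (hw : D.mulVec w = fun _ => (Fintype.card V : ℝ)) :
    ∀ u : V, w u ≤ (1 / 2) * ∑ i, |w i| := by
  intro u
  have hrow (a : V) : ∑ x, (G.dist a x : ℝ) * w x = Fintype.card V := by
    simpa [Matrix.mulVec, dotProduct, hD] using congrFun hw a
  have : Nontrivial V := by
    by_contra hV
    have := not_nontrivial_iff_subsingleton.mp hV
    have hcard : (0 : ℝ) < Fintype.card V := by exact_mod_cast Fintype.card_pos_iff.mpr ⟨u⟩
    simp only [Subsingleton.elim _ u, SimpleGraph.dist_self, Nat.cast_zero, zero_mul,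
      sum_const_zero] at hrow
    linarith [hrow u]
  obtain ⟨v, huv⟩ := hG.preconnected.exists_adj_of_nontrivial u
  simp_rw [abs_of_nonneg (hw0 _)]
  linarith [huv.sum_dist_mul_add_two_mul_le hw0, hrow u, hrow v]
end

section
/- Let G₁ and G₂ be finite connected simple graphs, each having at least two vertices, with distance matrices D₁, D₂ and constant curvatures K₁ > 0 and K₂ > 0 respectively (i.e., D₁(K₁·𝟏) = n₁·𝟏 and D₂(K₂·𝟏) = n₂·𝟏, where nᵢ = |V(Gᵢ)|). Suppose each Gᵢ is discrete Bonnet–Myers sharp, i.e., diam(Gᵢ)·Kᵢ = 2. Then the Cartesian (box) product G₁ □ G₂ has constant curvature K = K₁K₂/(K₁+K₂) and is discrete Bonnet–Myers sharp: diam(G₁ □ G₂)·K = 2. -/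
/-!
Distances in `G₁ □ G₂` add coordinatewise, so every row sum of its distance matrix is
`n₂ · n₁/K₁ + n₁ · n₂/K₂`, and diameters add. Both claims then reduce to
`1/K = 1/K₁ + 1/K₂`.
-/

namespace SimpleGraph

variable {α β : Type*} {G : SimpleGraph α} {H : SimpleGraph β}

lemma dist_boxProd {x y : α × β} (h₁ : G.Reachable x.1 y.1) (h₂ : H.Reachable x.2 y.2) :
    (G □ H).dist x y = G.dist x.1 y.1 + H.dist x.2 y.2 := by
  rw [dist, edist_boxProd, ENat.toNat_add (edist_ne_top_iff_reachable.mpr h₁)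
    (edist_ne_top_iff_reachable.mpr h₂)]
  rfl

lemma ediam_boxProd [Nonempty α] [Nonempty β] : (G □ H).ediam = G.ediam + H.ediam := by
  refine le_antisymm (ediam_le_of_edist_le fun x y => ?_) ?_
  · rw [edist_boxProd]
    exact add_le_add edist_le_ediam edist_le_ediam
  · rw [ediam_def (G := G), ediam_def (G := H)]
    refine ENat.iSup_add_iSup_le fun p q => ?_
    simpa using edist_le_ediam (G := G □ H) (u := (p.1, q.1)) (v := (p.2, q.2))

lemma diam_boxProd [Finite α] [Finite β] (hG : G.Connected) (hH : H.Connected) :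
    (G □ H).diam = G.diam + H.diam := by
  have := hG.nonempty
  have := hH.nonempty
  rw [diam, ediam_boxProd, ENat.toNat_add (connected_iff_ediam_ne_top.mp hG)
    (connected_iff_ediam_ne_top.mp hH)]
  rfl

lemma sum_dist_boxProd [Fintype α] [Fintype β] (hG : G.Connected) (hH : H.Connected)
    (x : α × β) :
    ∑ y, (G □ H).dist x y =
      Fintype.card β * ∑ a, G.dist x.1 a + Fintype.card α * ∑ b, H.dist x.2 b := by
  simp only [dist_boxProd (hG.preconnected _ _) (hH.preconnected _ _), Fintype.sum_prod_type,
    Finset.sum_add_distrib, Finset.sum_const, Finset.card_univ, smul_eq_mul, Finset.mul_sum]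

end SimpleGraph

lemma Matrix.mulVec_const_apply {m n R : Type*} [Fintype n] [NonUnitalNonAssocSemiring R]
    (A : Matrix m n R) (k : R) (i : m) : A.mulVec (fun _ => k) i = (∑ j, A i j) * k := by
  simp only [Matrix.mulVec, dotProduct, Finset.sum_mul]

open SimpleGraph in
theorem stmt_3_general {V₁ V₂ : Type*} [Fintype V₁] [Fintype V₂]
    (G₁ : SimpleGraph V₁) (G₂ : SimpleGraph V₂)
    (hG₁ : G₁.Connected) (hG₂ : G₂.Connected)
    (D₁ : Matrix V₁ V₁ ℝ) (hD₁ : ∀ a b, D₁ a b = (G₁.dist a b : ℝ))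
    (D₂ : Matrix V₂ V₂ ℝ) (hD₂ : ∀ a b, D₂ a b = (G₂.dist a b : ℝ))
    (K₁ K₂ : ℝ) (hK₁ : 0 < K₁) (hK₂ : 0 < K₂)
    (hc₁ : D₁.mulVec (fun _ => K₁) = fun _ => (Fintype.card V₁ : ℝ))
    (hc₂ : D₂.mulVec (fun _ => K₂) = fun _ => (Fintype.card V₂ : ℝ))
    (hs₁ : (G₁.diam : ℝ) * K₁ = 2) (hs₂ : (G₂.diam : ℝ) * K₂ = 2) :
    (Matrix.of fun a b : V₁ × V₂ => ((G₁.boxProd G₂).dist a b : ℝ)).mulVec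
        (fun _ => K₁ * K₂ / (K₁ + K₂)) = (fun _ => (Fintype.card (V₁ × V₂) : ℝ)) ∧
      ((G₁.boxProd G₂).diam : ℝ) * (K₁ * K₂ / (K₁ + K₂)) = 2 := by
  have hK : K₁ + K₂ ≠ 0 := (add_pos hK₁ hK₂).ne'
  refine ⟨funext fun x => ?_, ?_⟩
  · have hrow₁ := congrFun hc₁ x.1
    have hrow₂ := congrFun hc₂ x.2
    simp only [Matrix.mulVec_const_apply, hD₁, hD₂] at hrow₁ hrow₂
    rw [Matrix.mulVec_const_apply]
    simp only [Matrix.of_apply]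
    rw [← Nat.cast_sum, sum_dist_boxProd hG₁ hG₂, Fintype.card_prod]
    push_cast
    field_simp
    linear_combination (↑(Fintype.card V₂) * K₂) * hrow₁ + (↑(Fintype.card V₁) * K₁) * hrow₂
  · rw [diam_boxProd hG₁ hG₂]
    push_cast
    field_simp
    linear_combination K₂ * hs₁ + K₁ * hs₂

/-- If `G₁` and `G₂` are finite connected simple graphs (each with at least
two vertices) with constant curvatures `K₁, K₂ > 0` and each is discrete Bonnet–Myers
sharp (`diam(Gᵢ)·Kᵢ = 2`), then the Cartesian (box) product `G₁ □ G₂` has constant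
curvature `K = K₁K₂/(K₁+K₂)` and is discrete Bonnet–Myers sharp. -/
theorem stmt_3 {V₁ V₂ : Type*} [Fintype V₁] [Fintype V₂]
    (G₁ : SimpleGraph V₁) (G₂ : SimpleGraph V₂)
    (hG₁ : G₁.Connected) (hG₂ : G₂.Connected)
    (hn₁ : 2 ≤ Fintype.card V₁) (hn₂ : 2 ≤ Fintype.card V₂)
    (D₁ : Matrix V₁ V₁ ℝ) (hD₁ : ∀ a b, D₁ a b = (G₁.dist a b : ℝ))
    (D₂ : Matrix V₂ V₂ ℝ) (hD₂ : ∀ a b, D₂ a b = (G₂.dist a b : ℝ))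
    (K₁ K₂ : ℝ) (hK₁ : 0 < K₁) (hK₂ : 0 < K₂)
    (hc₁ : D₁.mulVec (fun _ => K₁) = fun _ => (Fintype.card V₁ : ℝ))
    (hc₂ : D₂.mulVec (fun _ => K₂) = fun _ => (Fintype.card V₂ : ℝ))
    (hs₁ : (G₁.diam : ℝ) * K₁ = 2) (hs₂ : (G₂.diam : ℝ) * K₂ = 2) :
    (Matrix.of fun a b : V₁ × V₂ => ((G₁.boxProd G₂).dist a b : ℝ)).mulVec
        (fun _ => K₁ * K₂ / (K₁ + K₂)) = (fun _ => (Fintype.card (V₁ × V₂) : ℝ)) ∧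
      ((G₁.boxProd G₂).diam : ℝ) * (K₁ * K₂ / (K₁ + K₂)) = 2 :=
  stmt_3_general G₁ G₂ hG₁ hG₂ D₁ hD₁ D₂ hD₂ K₁ K₂ hK₁ hK₂ hc₁ hc₂ hs₁ hs₂
end

section
/- Let G' be a finite connected simple graph on n vertices with constant curvature K > 0 (i.e., its distance matrix D' satisfies D'(K·𝟏) = n·𝟏). Let G be the graph obtained by adding an edge between two disjoint copies of G', joining a vertex u in the first copy to a vertex v in the second copy. Then G has a curvature w (D_G w = 2n·𝟏) whose value is (2−n)·2K/(4+K) at u and at v, and 4K/(4+K) at every other vertex. -/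
/-!
Within a copy the bridge is never a shortcut, and a path between the copies must cross it, so
distances in the bridged graph are `d(a, b)` within a copy and `d(a, u) + 1 + d(v, b)` across;
the lower bound holds because this candidate changes by at most one along every edge.
Put `c = 4K/(4+K)` everywhere except `d = (2-n)·2K/(4+K)` at `u` and `v`. Since `K` times every
row sum of `D'` is `n`, the row of a vertex `a` of the first copy sums to
`8n/(4+K) + (2(d - c) + n c)·d(a, u) + n c + d - c`; the choice of `c` and `d` kills the
coefficient of `d(a, u)` and makes the rest `2n`.
-/

/-- The graph obtained by adding an edge between the vertex `u` of `G₁` and the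
vertex `v` of `G₂` (the graphs being on disjoint vertex sets). -/
def bridgeGraph {V₁ V₂ : Type*} (G₁ : SimpleGraph V₁) (G₂ : SimpleGraph V₂)
    (u : V₁) (v : V₂) : SimpleGraph (V₁ ⊕ V₂) :=
  SimpleGraph.fromRel (fun x y =>
    (∃ a b, x = Sum.inl a ∧ y = Sum.inl b ∧ G₁.Adj a b) ∨
    (∃ a b, x = Sum.inr a ∧ y = Sum.inr b ∧ G₂.Adj a b) ∨
    (x = Sum.inl u ∧ y = Sum.inr v))

namespace SimpleGraph

variable {W : Type*} {G : SimpleGraph W}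

lemma Adj.dist_le_dist_add_one_s7 {a b : W} (h : G.Adj a b) (c : W) :
    G.dist a c ≤ G.dist b c + 1 := by
  rw [G.dist_comm, G.dist_comm (u := b)]
  rcases h.symm.diff_dist_adj (u := c) with h | h | h <;> omega

lemma Walk.le_length_add_of_adj_le (f : W → ℕ) (hf : ∀ x y, G.Adj x y → f x ≤ f y + 1)
    {x y : W} (p : G.Walk x y) : f x ≤ p.length + f y := by
  induction p with
  | nil => simp
  | cons h _ ih => have := hf _ _ h; rw [Walk.length_cons]; omega

lemma Reachable.le_dist_add_of_adj_le (f : W → ℕ) (hf : ∀ x y, G.Adj x y → f x ≤ f y + 1)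
    {x y : W} (h : G.Reachable x y) : f x ≤ G.dist x y + f y := by
  obtain ⟨p, hp⟩ := h.exists_walk_length_eq_dist
  exact hp ▸ p.le_length_add_of_adj_le f hf

end SimpleGraph

section Bridge

variable {V₁ V₂ : Type*} {G₁ : SimpleGraph V₁} {G₂ : SimpleGraph V₂} {u : V₁} {v : V₂}

@[simp]
lemma bridgeGraph_adj_inl_inl {a b : V₁} :
    (bridgeGraph G₁ G₂ u v).Adj (.inl a) (.inl b) ↔ G₁.Adj a b := by
  simpa [bridgeGraph, SimpleGraph.fromRel_adj, SimpleGraph.adj_comm _ b a]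
    using SimpleGraph.Adj.ne

@[simp]
lemma bridgeGraph_adj_inr_inr {a b : V₂} :
    (bridgeGraph G₁ G₂ u v).Adj (.inr a) (.inr b) ↔ G₂.Adj a b := by
  simpa [bridgeGraph, SimpleGraph.fromRel_adj, SimpleGraph.adj_comm _ b a]
    using SimpleGraph.Adj.ne

@[simp]
lemma bridgeGraph_adj_inl_inr {a : V₁} {b : V₂} :
    (bridgeGraph G₁ G₂ u v).Adj (.inl a) (.inr b) ↔ a = u ∧ b = v := by
  simp [bridgeGraph, SimpleGraph.fromRel_adj]

@[simp]
lemma bridgeGraph_adj_inr_inl {a : V₂} {b : V₁} :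
    (bridgeGraph G₁ G₂ u v).Adj (.inr a) (.inl b) ↔ b = u ∧ a = v := by
  simp [bridgeGraph, SimpleGraph.fromRel_adj]

variable (G₁ G₂ u v)

def bridgeGraph.inlHom : G₁ →g bridgeGraph G₁ G₂ u v where
  toFun := Sum.inl
  map_rel' := bridgeGraph_adj_inl_inl.mpr

def bridgeGraph.inrHom : G₂ →g bridgeGraph G₁ G₂ u v where
  toFun := Sum.inr
  map_rel' := bridgeGraph_adj_inr_inr.mpr

noncomputable def bridgeDist : V₁ ⊕ V₂ → V₁ ⊕ V₂ → ℕ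
  | .inl a, .inl b => G₁.dist a b
  | .inl a, .inr b => G₁.dist a u + 1 + G₂.dist v b
  | .inr a, .inl b => G₁.dist b u + 1 + G₂.dist v a
  | .inr a, .inr b => G₂.dist a b

variable {G₁ G₂ u v}

lemma exists_walk_length_eq_bridgeDist (h₁ : G₁.Connected) (h₂ : G₂.Connected)
    (x y : V₁ ⊕ V₂) :
    ∃ p : (bridgeGraph G₁ G₂ u v).Walk x y, p.length = bridgeDist G₁ G₂ u v x y := by
  let f := bridgeGraph.inlHom G₁ G₂ u v
  let g := bridgeGraph.inrHom G₁ G₂ u v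
  have cross : ∀ a b, ∃ p : (bridgeGraph G₁ G₂ u v).Walk (.inl a) (.inr b),
      p.length = bridgeDist G₁ G₂ u v (.inl a) (.inr b) := fun a b => by
    obtain ⟨p, hp⟩ := h₁.exists_walk_length_eq_dist a u
    obtain ⟨q, hq⟩ := h₂.exists_walk_length_eq_dist v b
    have hadj : (bridgeGraph G₁ G₂ u v).Adj (f u) (g v) := bridgeGraph_adj_inl_inr.mpr ⟨rfl, rfl⟩
    have hlen : ((p.map f).append (.cons hadj (q.map g))).length
        = G₁.dist a u + 1 + G₂.dist v b := by
      simp only [SimpleGraph.Walk.length_append, SimpleGraph.Walk.length_cons,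
        SimpleGraph.Walk.length_map, hp, hq]
      omega
    exact ⟨_, hlen⟩
  rcases x with a | a <;> rcases y with b | b
  · obtain ⟨p, hp⟩ := h₁.exists_walk_length_eq_dist a b
    exact ⟨p.map f, (p.length_map f).trans hp⟩
  · exact cross a b
  · obtain ⟨p, hp⟩ := cross b a
    exact ⟨p.reverse, by simpa [bridgeDist] using hp⟩
  · obtain ⟨p, hp⟩ := h₂.exists_walk_length_eq_dist a b
    exact ⟨p.map g, (p.length_map g).trans hp⟩

lemma bridgeDist_le_bridgeDist_add_one {x y : V₁ ⊕ V₂} (h : (bridgeGraph G₁ G₂ u v).Adj x y)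
    (z : V₁ ⊕ V₂) : bridgeDist G₁ G₂ u v x z ≤ bridgeDist G₁ G₂ u v y z + 1 := by
  rcases x with a | a <;> rcases y with b | b <;> rcases z with c | c <;>
    simp only [bridgeGraph_adj_inl_inl, bridgeGraph_adj_inr_inr, bridgeGraph_adj_inl_inr,
      bridgeGraph_adj_inr_inl] at h
  all_goals simp only [bridgeDist]
  · exact h.dist_le_dist_add_one_s7 c
  · have := h.dist_le_dist_add_one_s7 u
    omega
  · obtain ⟨rfl, rfl⟩ := h
    simp only [G₁.dist_comm (u := c), SimpleGraph.dist_self]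
    omega
  · obtain ⟨rfl, rfl⟩ := h
    simp only [SimpleGraph.dist_self]
    omega
  · obtain ⟨rfl, rfl⟩ := h
    simp only [G₁.dist_comm (u := c), SimpleGraph.dist_self]
    omega
  · obtain ⟨rfl, rfl⟩ := h
    simp only [G₂.dist_comm (u := a), SimpleGraph.dist_self]
    omega
  · have := h.dist_le_dist_add_one_s7 v
    rw [G₂.dist_comm, G₂.dist_comm (u := b)] at this
    omega
  · exact h.dist_le_dist_add_one_s7 c

theorem dist_bridgeGraph (h₁ : G₁.Connected) (h₂ : G₂.Connected) (x y : V₁ ⊕ V₂) :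
    (bridgeGraph G₁ G₂ u v).dist x y = bridgeDist G₁ G₂ u v x y := by
  obtain ⟨p, hp⟩ := exists_walk_length_eq_bridgeDist h₁ h₂ x y
  refine le_antisymm (hp ▸ SimpleGraph.dist_le p) ?_
  have := p.reachable.le_dist_add_of_adj_le
    (bridgeDist G₁ G₂ u v · y) fun _ _ h => bridgeDist_le_bridgeDist_add_one h y
  rcases y with b | b <;> simpa [bridgeDist] using this

end Bridge

section DistanceMatrix

variable {V₁ V₂ : Type*} [Fintype V₁] [Fintype V₂] {G₁ : SimpleGraph V₁} {G₂ : SimpleGraph V₂}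
  {u : V₁} {v : V₂}

lemma mulVec_dist_bridgeGraph_inl (h₁ : G₁.Connected) (h₂ : G₂.Connected)
    (w₁ : V₁ → ℝ) (w₂ : V₂ → ℝ) (a : V₁) :
    (Matrix.of fun x y => ((bridgeGraph G₁ G₂ u v).dist x y : ℝ)).mulVec (Sum.elim w₁ w₂) (.inl a)
      = ∑ b, (G₁.dist a b : ℝ) * w₁ b + ∑ b, ((G₁.dist a u : ℝ) + 1 + G₂.dist v b) * w₂ b := by
  simp [Matrix.mulVec, dotProduct, Fintype.sum_sum_type, dist_bridgeGraph h₁ h₂, bridgeDist]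

lemma mulVec_dist_bridgeGraph_inr (h₁ : G₁.Connected) (h₂ : G₂.Connected)
    (w₁ : V₁ → ℝ) (w₂ : V₂ → ℝ) (a : V₂) :
    (Matrix.of fun x y => ((bridgeGraph G₁ G₂ u v).dist x y : ℝ)).mulVec (Sum.elim w₁ w₂) (.inr a)
      = ∑ b, ((G₁.dist b u : ℝ) + 1 + G₂.dist v a) * w₁ b + ∑ b, (G₂.dist a b : ℝ) * w₂ b := by
  simp [Matrix.mulVec, dotProduct, Fintype.sum_sum_type, dist_bridgeGraph h₁ h₂, bridgeDist]

end DistanceMatrix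

lemma Finset.sum_mul_ite_eq {V R : Type*} [Fintype V] [DecidableEq V] [CommRing R]
    (f : V → R) (p : V) (c d : R) :
    ∑ b, f b * (if b = p then d else c) = c * ∑ b, f b + (d - c) * f p := by
  have split : ∀ b, f b * (if b = p then d else c) = c * f b + if b = p then (d - c) * f b else 0 :=
    fun b => by split_ifs <;> ring
  simp [split, Finset.sum_add_distrib, Finset.mul_sum]

section Curvature

variable {V : Type*} [Fintype V] [DecidableEq V]

noncomputable def bridgeCurvature (K : ℝ) (p x : V) : ℝ :=
  if x = p then (2 - Fintype.card V) * (2 * K) / (4 + K) else 4 * K / (4 + K)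

variable {G : SimpleGraph V} {K : ℝ}

lemma sum_dist_mul_bridgeCurvature (hK : 4 + K ≠ 0)
    (hcurv : ∀ a, K * ∑ b, (G.dist a b : ℝ) = Fintype.card V) (p q a : V) :
    ∑ b, (G.dist a b : ℝ) * bridgeCurvature K p b
      + ∑ b, ((G.dist a p : ℝ) + 1 + G.dist q b) * bridgeCurvature K q b
      = 2 * Fintype.card V := by
  simp only [bridgeCurvature, Finset.sum_mul_ite_eq, SimpleGraph.dist_self, Finset.sum_add_distrib,
    Finset.sum_const, Finset.card_univ, nsmul_eq_mul]
  field_simp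
  linear_combination 4 * hcurv a + 4 * hcurv q

end Curvature

/-- If `G'` is a finite connected graph on `n` vertices with constant
curvature `K > 0`, then the graph obtained by adding an edge between two disjoint
copies of `G'` (joining `u` in the first copy to `v` in the second copy) has a
curvature whose value is `(2−n)·2K/(4+K)` at `u` and `v` and `4K/(4+K)` elsewhere. -/
theorem stmt_7 {V : Type*} [Fintype V] (G' : SimpleGraph V) (hG' : G'.Connected)
    (K : ℝ) (hK : 0 < K)
    (hcurv : (Matrix.of fun a b => ((G'.dist a b : ℕ) : ℝ)).mulVec (fun _ => K)
      = fun _ => (Fintype.card V : ℝ))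
    (u v : V) :
    ∃ w : V ⊕ V → ℝ,
      (Matrix.of fun a b => ((bridgeGraph G' G' u v).dist a b : ℝ)).mulVec w
          = (fun _ => 2 * (Fintype.card V : ℝ)) ∧
        w (Sum.inl u) = (2 - (Fintype.card V : ℝ)) * (2 * K) / (4 + K) ∧
        w (Sum.inr v) = (2 - (Fintype.card V : ℝ)) * (2 * K) / (4 + K) ∧
        ∀ x, x ≠ Sum.inl u → x ≠ Sum.inr v → w x = 4 * K / (4 + K) := by
  classical
  have hK4 : 4 + K ≠ 0 := by positivity
  have hrow : ∀ a, K * ∑ b, (G'.dist a b : ℝ) = Fintype.card V := fun a => by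
    simpa [Matrix.mulVec, dotProduct, Finset.mul_sum, mul_comm] using congrFun hcurv a
  refine ⟨Sum.elim (bridgeCurvature K u) (bridgeCurvature K v), funext ?_,
    by simp [bridgeCurvature], by simp [bridgeCurvature], ?_⟩
  · rintro (a | a)
    · rw [mulVec_dist_bridgeGraph_inl hG' hG']
      exact sum_dist_mul_bridgeCurvature hK4 hrow u v a
    · rw [mulVec_dist_bridgeGraph_inr hG' hG', add_comm,
        ← sum_dist_mul_bridgeCurvature hK4 hrow v u a]
      congr 1
      refine Finset.sum_congr rfl fun b _ => ?_
      rw [G'.dist_comm (u := b), G'.dist_comm (u := v)]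
      ring
  · rintro (x | x) hu hv <;> simp_all [bridgeCurvature]
end

section
/- Let G₁ and G₂ be finite connected simple graphs with n₁ and n₂ vertices, distance matrices D₁, D₂, and nonnegative curvatures w (D₁w = n₁·𝟏, w ≥ 0) and g (D₂g = n₂·𝟏, g ≥ 0). Let H be the graph obtained by merging G₁ and G₂ at a vertex, identifying u ∈ V(G₁) with v ∈ V(G₂). Then H has a curvature whose value at the merged vertex equals (‖g‖₁·w(u) − ‖w‖₁·(‖g‖₁ − g(v))) / (‖g‖₁·n₁ + ‖w‖₁·n₂) · (n₁+n₂−1), and which is nonnegative at all other vertices. -/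
/-!
The merged graph `H` embeds isometrically into the box product `G₁ □ G₂`, as the wedge
`V₁ × {v} ∪ {u} × V₂`; hence `d_H(x, y) = d₁(x₁, y₁) + d₂(x₂, y₂)` for the coordinates of `x` and `y`.
Now take `f` on `V₁` and `h` on `V₂` with `D₁ f ≡ c₁`, `D₂ h ≡ c₂` and equal total mass `s`, and glue
them into a vector on `H` whose value at the merged vertex is `f u + h v - s`. Expanding `D_H` with
the distance formula, the mass terms `d₂(x₂, v) · s` and `d₁(x₁, u) · s` coming from the other side
are exactly cancelled by the `-s`, so `D_H` of the glued vector is `c₁ + c₂`. Applied to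
`f = k ‖g‖₁ w` and `h = k ‖w‖₁ g` with `k = (n₁ + n₂ - 1) / (‖g‖₁ n₁ + ‖w‖₁ n₂)` this gives the
curvature, and it is nonnegative away from the merged vertex because `w, g ≥ 0`.
-/

/-- The graph obtained by merging `G₁` and `G₂` at a vertex: add an edge between
`u ∈ V(G₁)` and `v ∈ V(G₂)` and contract it, identifying `u` and `v`.  The merged
vertex is represented by `Sum.inl u`. -/
def mergeGraph {V₁ V₂ : Type*} (G₁ : SimpleGraph V₁) (G₂ : SimpleGraph V₂)
    (u : V₁) (v : V₂) : SimpleGraph (V₁ ⊕ {y : V₂ // y ≠ v}) :=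
  SimpleGraph.fromRel (fun x y =>
    (∃ a b, x = Sum.inl a ∧ y = Sum.inl b ∧ G₁.Adj a b) ∨
    (∃ a b, x = Sum.inr a ∧ y = Sum.inr b ∧ G₂.Adj a.1 b.1) ∨
    (∃ b, x = Sum.inl u ∧ y = Sum.inr b ∧ G₂.Adj v b.1))

open SimpleGraph Matrix

theorem SimpleGraph.Hom.edist_le {V W : Type*} {G : SimpleGraph V} {G' : SimpleGraph W}
    (f : G →g G') (a b : V) : G'.edist (f a) (f b) ≤ G.edist a b := by
  by_cases h : G.Reachable a b
  · obtain ⟨p, hp⟩ := h.exists_walk_length_eq_edist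
    simpa [hp] using G'.edist_le (p.map f)
  · simp [edist_eq_top_of_not_reachable h]

namespace mergeGraph

variable {V₁ V₂ : Type*} {G₁ : SimpleGraph V₁} {G₂ : SimpleGraph V₂} {u : V₁} {v : V₂}

def toProd (u : V₁) (v : V₂) : V₁ ⊕ {y : V₂ // y ≠ v} → V₁ × V₂ :=
  Sum.elim (fun a => (a, v)) (fun b => (u, b))

lemma toProd_injective : Function.Injective (toProd u v) := by
  rintro (a | ⟨a, ha⟩) (b | ⟨b, hb⟩) h <;>
    simp only [toProd, Sum.elim_inl, Sum.elim_inr, Prod.mk.injEq] at h <;> grind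

theorem adj_iff_boxProd_adj {x y : V₁ ⊕ {y : V₂ // y ≠ v}} :
    (mergeGraph G₁ G₂ u v).Adj x y ↔ (G₁ □ G₂).Adj (toProd u v x) (toProd u v y) := by
  rcases x with a | ⟨a, ha⟩ <;> rcases y with b | ⟨b, hb⟩ <;>
    simp only [mergeGraph, fromRel_adj, toProd, Sum.elim_inl, Sum.elim_inr, boxProd_adj] <;>
    grind [SimpleGraph.Adj.symm, SimpleGraph.Adj.ne]

def toBoxProd (G₁ : SimpleGraph V₁) (G₂ : SimpleGraph V₂) (u : V₁) (v : V₂) :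
    mergeGraph G₁ G₂ u v ↪g G₁ □ G₂ where
  toFun := toProd u v
  inj' := toProd_injective
  map_rel_iff' := adj_iff_boxProd_adj.symm

def inlHom (G₁ : SimpleGraph V₁) (G₂ : SimpleGraph V₂) (u : V₁) (v : V₂) :
    G₁ →g mergeGraph G₁ G₂ u v where
  toFun := Sum.inl
  map_rel' h := adj_iff_boxProd_adj.mpr (boxProd_adj_left.mpr h)

section inr

variable [DecidableEq V₂]

def inrHom (G₁ : SimpleGraph V₁) (G₂ : SimpleGraph V₂) (u : V₁) (v : V₂) :
    G₂ →g mergeGraph G₁ G₂ u v where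
  toFun b := if h : b = v then Sum.inl u else Sum.inr ⟨b, h⟩
  map_rel' {b c} h := by
    refine adj_iff_boxProd_adj.mpr ?_
    have toProd_ite (b : V₂) :
        toProd u v (if h : b = v then Sum.inl u else Sum.inr ⟨b, h⟩) = (u, b) := by
      split_ifs with hb <;> simp [toProd, hb]
    simpa only [toProd_ite] using boxProd_adj_right.mpr h

lemma inrHom_self : inrHom G₁ G₂ u v v = Sum.inl u := dif_pos rfl

lemma inrHom_of_ne {b : V₂} (hb : b ≠ v) : inrHom G₁ G₂ u v b = Sum.inr ⟨b, hb⟩ := dif_neg hb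

theorem edist_eq (x y : V₁ ⊕ {y : V₂ // y ≠ v}) :
    (mergeGraph G₁ G₂ u v).edist x y = (G₁ □ G₂).edist (toProd u v x) (toProd u v y) := by
  refine le_antisymm ?_ ((toBoxProd G₁ G₂ u v).toHom.edist_le x y)
  have cross (a : V₁) (b : {y : V₂ // y ≠ v}) :
      (mergeGraph G₁ G₂ u v).edist (Sum.inl a) (Sum.inr b) ≤ G₁.edist a u + G₂.edist v b := by
    calc _ ≤ (mergeGraph G₁ G₂ u v).edist (Sum.inl a) (Sum.inl u)
          + (mergeGraph G₁ G₂ u v).edist (inrHom G₁ G₂ u v v) (inrHom G₁ G₂ u v b) := by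
          rw [inrHom_self, inrHom_of_ne b.2]; exact SimpleGraph.edist_triangle
      _ ≤ _ := add_le_add ((inlHom G₁ G₂ u v).edist_le a u) ((inrHom G₁ G₂ u v).edist_le v b)
  rcases x with a | a <;> rcases y with b | b <;>
    simp only [toProd, Sum.elim_inl, Sum.elim_inr, edist_boxProd, SimpleGraph.edist_self, add_zero,
      zero_add]
  · exact (inlHom G₁ G₂ u v).edist_le a b
  · exact cross a b
  · rw [SimpleGraph.edist_comm, G₁.edist_comm (u := u), G₂.edist_comm]; exact cross b a
  · simpa only [inrHom_of_ne a.2, inrHom_of_ne b.2] using (inrHom G₁ G₂ u v).edist_le a b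

theorem dist_eq (hG₁ : G₁.Connected) (hG₂ : G₂.Connected) (x y : V₁ ⊕ {y : V₂ // y ≠ v}) :
    (mergeGraph G₁ G₂ u v).dist x y
      = G₁.dist (toProd u v x).1 (toProd u v y).1 + G₂.dist (toProd u v x).2 (toProd u v y).2 := by
  rw [SimpleGraph.dist, edist_eq, edist_boxProd, ENat.toNat_add]
  exacts [rfl, edist_ne_top_iff_reachable.mpr (hG₁.preconnected _ _),
    edist_ne_top_iff_reachable.mpr (hG₂.preconnected _ _)]

end inr

end mergeGraph

noncomputable def SimpleGraph.distMatrix {V : Type*} (G : SimpleGraph V) : Matrix V V ℝ :=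
  Matrix.of fun a b => (G.dist a b : ℝ)

theorem sum_pos_of_mulVec_eq_const {m n : Type*} [Fintype n] [Nonempty m]
    {M : Matrix m n ℝ} {w : n → ℝ} {c : ℝ} (hw0 : ∀ i, 0 ≤ w i) (hw : M *ᵥ w = fun _ => c)
    (hc : 0 < c) : 0 < ∑ i, w i := by
  refine (Finset.sum_nonneg fun i _ => hw0 i).lt_of_ne fun hsum => hc.ne' ?_
  have hzero : w = 0 := funext fun i =>
    (Finset.sum_eq_zero_iff_of_nonneg fun i _ => hw0 i).mp hsum.symm i (Finset.mem_univ i)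
  simpa [hzero] using (congrFun hw (Classical.arbitrary m)).symm

section mergeVec

variable {V₁ V₂ : Type*} [Fintype V₁] [Fintype V₂] [DecidableEq V₁] [DecidableEq V₂]

def mergeVec (u : V₁) (v : V₂) (f : V₁ → ℝ) (h : V₂ → ℝ) : V₁ ⊕ {y : V₂ // y ≠ v} → ℝ :=
  Sum.elim (fun a => f a + if a = u then h v - ∑ b, h b else 0) (fun b => h b)

theorem sum_mul_mergeVec (u : V₁) (v : V₂) (f : V₁ → ℝ) (h : V₂ → ℝ) (φ : V₁ × V₂ → ℝ) :
    ∑ x, φ (mergeGraph.toProd u v x) * mergeVec u v f h x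
      = ∑ a, φ (a, v) * f a + ∑ b, φ (u, b) * h b - φ (u, v) * ∑ b, h b := by
  rw [Fintype.sum_sum_type, Fintype.sum_eq_add_sum_subtype_ne _ v]
  simp only [mergeGraph.toProd, mergeVec, Sum.elim_inl, Sum.elim_inr, mul_add, mul_ite, mul_zero,
    Finset.sum_add_distrib, Finset.sum_ite_eq', Finset.mem_univ, if_true]
  ring

theorem mulVec_mergeVec {G₁ : SimpleGraph V₁} {G₂ : SimpleGraph V₂} (hG₁ : G₁.Connected)
    (hG₂ : G₂.Connected) (u : V₁) (v : V₂) {f : V₁ → ℝ} {h : V₂ → ℝ} {c₁ c₂ : ℝ}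
    (hf : G₁.distMatrix *ᵥ f = fun _ => c₁) (hh : G₂.distMatrix *ᵥ h = fun _ => c₂)
    (hfh : ∑ a, f a = ∑ b, h b) :
    (mergeGraph G₁ G₂ u v).distMatrix *ᵥ mergeVec u v f h = fun _ => c₁ + c₂ := by
  funext x
  set p := mergeGraph.toProd u v x
  have hf' : ∑ a, (G₁.dist p.1 a : ℝ) * f a = c₁ := congrFun hf p.1
  have hh' : ∑ b, (G₂.dist p.2 b : ℝ) * h b = c₂ := congrFun hh p.2
  calc ((mergeGraph G₁ G₂ u v).distMatrix *ᵥ mergeVec u v f h) x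
      = ∑ y, ((G₁.dist p.1 (mergeGraph.toProd u v y).1 : ℝ)
          + G₂.dist p.2 (mergeGraph.toProd u v y).2) * mergeVec u v f h y := by
        simp [mulVec, dotProduct, distMatrix, mergeGraph.dist_eq hG₁ hG₂, p]
    _ = ∑ a, ((G₁.dist p.1 a : ℝ) + G₂.dist p.2 v) * f a
          + ∑ b, ((G₁.dist p.1 u : ℝ) + G₂.dist p.2 b) * h b
          - ((G₁.dist p.1 u : ℝ) + G₂.dist p.2 v) * ∑ b, h b :=
        sum_mul_mergeVec u v f h fun q => (G₁.dist p.1 q.1 : ℝ) + G₂.dist p.2 q.2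
    _ = c₁ + c₂ := by
        simp only [add_mul, Finset.sum_add_distrib, ← Finset.mul_sum, hf', hh', hfh]
        ring

theorem mulVec_mergeVec_smul {G₁ : SimpleGraph V₁} {G₂ : SimpleGraph V₂} (hG₁ : G₁.Connected)
    (hG₂ : G₂.Connected) (u : V₁) (v : V₂) {w : V₁ → ℝ} {g : V₂ → ℝ} {n₁ n₂ : ℝ}
    (hw : G₁.distMatrix *ᵥ w = fun _ => n₁) (hg : G₂.distMatrix *ᵥ g = fun _ => n₂) (k : ℝ) :
    (mergeGraph G₁ G₂ u v).distMatrix *ᵥ mergeVec u v ((k * ∑ b, g b) • w) ((k * ∑ a, w a) • g)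
      = fun _ => k * ((∑ b, g b) * n₁ + (∑ a, w a) * n₂) := by
  rw [mulVec_mergeVec hG₁ hG₂ u v (c₁ := k * (∑ b, g b) * n₁) (c₂ := k * (∑ a, w a) * n₂)
    (by rw [mulVec_smul, hw]; rfl) (by rw [mulVec_smul, hg]; rfl)]
  · funext
    ring
  · simp only [Pi.smul_apply, smul_eq_mul, ← Finset.mul_sum]
    ring

end mergeVec

/-- If `G₁`, `G₂` have nonnegative curvatures `w` and `g`, then the graph
obtained by merging them at a vertex (identifying `u` with `v`) has a curvature whose
value at the merged vertex equals
`(‖g‖₁·w(u) − ‖w‖₁·(‖g‖₁ − g(v))) / (‖g‖₁·n₁ + ‖w‖₁·n₂) · (n₁+n₂−1)`, and which is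
nonnegative at all other vertices. -/
theorem stmt_9 {V₁ V₂ : Type*} [Fintype V₁] [Fintype V₂] [DecidableEq V₂]
    (G₁ : SimpleGraph V₁) (G₂ : SimpleGraph V₂)
    (hG₁ : G₁.Connected) (hG₂ : G₂.Connected)
    (D₁ : Matrix V₁ V₁ ℝ) (hD₁ : ∀ a b, D₁ a b = (G₁.dist a b : ℝ))
    (D₂ : Matrix V₂ V₂ ℝ) (hD₂ : ∀ a b, D₂ a b = (G₂.dist a b : ℝ))
    (w : V₁ → ℝ) (hw0 : ∀ i, 0 ≤ w i)
    (hw : D₁.mulVec w = fun _ => (Fintype.card V₁ : ℝ))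
    (g : V₂ → ℝ) (hg0 : ∀ i, 0 ≤ g i)
    (hg : D₂.mulVec g = fun _ => (Fintype.card V₂ : ℝ))
    (u : V₁) (v : V₂)
    (n₁ : ℝ) (hn₁ : n₁ = (Fintype.card V₁ : ℝ))
    (n₂ : ℝ) (hn₂ : n₂ = (Fintype.card V₂ : ℝ))
    (Lw : ℝ) (hLw : Lw = ∑ i, |w i|)
    (Lg : ℝ) (hLg : Lg = ∑ i, |g i|) :
    ∃ w' : V₁ ⊕ {y : V₂ // y ≠ v} → ℝ,
      (Matrix.of fun a b => ((mergeGraph G₁ G₂ u v).dist a b : ℝ)).mulVec w'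
          = (fun _ => n₁ + n₂ - 1) ∧
        w' (Sum.inl u)
          = (Lg * w u - Lw * (Lg - g v)) / (Lg * n₁ + Lw * n₂) * (n₁ + n₂ - 1) ∧
        ∀ x, x ≠ Sum.inl u → 0 ≤ w' x := by
  classical
  obtain rfl : D₁ = G₁.distMatrix := Matrix.ext hD₁
  obtain rfl : D₂ = G₂.distMatrix := Matrix.ext hD₂
  obtain rfl : Lw = ∑ i, w i := hLw.trans (Finset.sum_congr rfl fun i _ => abs_of_nonneg (hw0 i))
  obtain rfl : Lg = ∑ i, g i := hLg.trans (Finset.sum_congr rfl fun i _ => abs_of_nonneg (hg0 i))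
  rw [← hn₁] at hw
  rw [← hn₂] at hg
  have : Nonempty V₁ := hG₁.nonempty
  have : Nonempty V₂ := hG₂.nonempty
  have hn₁_one : 1 ≤ n₁ := hn₁ ▸ Nat.one_le_cast.mpr Fintype.card_pos
  have hn₂_one : 1 ≤ n₂ := hn₂ ▸ Nat.one_le_cast.mpr Fintype.card_pos
  have hLw_pos := sum_pos_of_mulVec_eq_const hw0 hw (by linarith)
  have hLg_pos := sum_pos_of_mulVec_eq_const hg0 hg (by linarith)
  have hden : 0 < (∑ b, g b) * n₁ + (∑ a, w a) * n₂ := by nlinarith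
  set k := (n₁ + n₂ - 1) / ((∑ b, g b) * n₁ + (∑ a, w a) * n₂)
  have hk : 0 ≤ k := div_nonneg (by linarith) hden.le
  refine ⟨mergeVec u v ((k * ∑ b, g b) • w) ((k * ∑ a, w a) • g), ?_, ?_, ?_⟩
  · rw [← SimpleGraph.distMatrix, mulVec_mergeVec_smul hG₁ hG₂ u v hw hg k]
    simp only [k]
    field_simp
  · simp only [mergeVec, Pi.smul_apply, smul_eq_mul, ← Finset.mul_sum, Sum.elim_inl, if_pos, k]
    field_simp
    ring
  · rintro (a | b) hx
    · have ha : a ≠ u := by rintro rfl; exact hx rfl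
      simp only [mergeVec, Pi.smul_apply, smul_eq_mul, Sum.elim_inl, if_neg ha, add_zero]
      exact mul_nonneg (mul_nonneg hk hLg_pos.le) (hw0 a)
    · exact mul_nonneg (mul_nonneg hk hLw_pos.le) (hg0 b)
end

section
/- Let T be a tree with n ≥ 3 vertices and l leaves, with distance matrix D. Let λ be the largest eigenvalue of D (the Perron root) and let η ∈ ℝⁿ be an entrywise nonnegative eigenvector with Dη = λη and ‖η‖₂ = 1. Then ⟨η, 𝟏⟩² > (n/2)·(λ/(λ−l+2)) + (n−l−1)/(λ−l+2). -/
/-!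
For a tree the Laplacian `L` and the distance matrix `D` satisfy `L D = (2 - deg) 𝟏ᵀ - 2 I`
(Graham–Lovász), so `L (D x) = -2 x` whenever `∑ x = 0`, and then
`xᵀ D x = -½ (D x)ᵀ L (D x) ≤ 0`: `D` is of negative type. Applied to `x = n η - s 𝟏` with
`s = ⟨η, 𝟏⟩` this gives `n² λ + s² W ≤ 2 n λ s²`, where `W = 𝟏ᵀ D 𝟏 ≥ 2 (n - 1)²`. Since every
column sum of `D` is at least `n - 1`, also `λ ≥ n - 1`, and with `l ≤ n` the bound follows by
elementary algebra.
-/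

open Finset Matrix

namespace Matrix

variable {V : Type*} [Fintype V]

lemma le_of_le_sum_apply_of_mulVec_eq_smul {A : Matrix V V ℝ} {x : V → ℝ} {c μ : ℝ}
    (hc : ∀ j, c ≤ ∑ i, A i j) (hx : ∀ i, 0 ≤ x i) (hx_sum : 0 < ∑ i, x i)
    (hAx : A *ᵥ x = μ • x) : c ≤ μ := by
  refine le_of_mul_le_mul_right ?_ hx_sum
  calc c * ∑ j, x j ≤ ∑ j, (∑ i, A i j) * x j := by
        rw [mul_sum]
        exact sum_le_sum fun j _ => mul_le_mul_of_nonneg_right (hc j) (hx j)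
    _ = ∑ i, (A *ᵥ x) i := by simp only [mulVec, dotProduct, sum_mul]; exact sum_comm
    _ = μ * ∑ i, x i := by simp [hAx, mul_sum]

lemma IsSymm.dotProduct_mulVec_smul_sub_smul_one {A : Matrix V V ℝ} (hA : A.IsSymm)
    {x : V → ℝ} {μ a b : ℝ} (hAx : A *ᵥ x = μ • x) (hx : ∑ i, x i ^ 2 = 1) :
    (a • x - b • 1) ⬝ᵥ (A *ᵥ (a • x - b • 1))
      = a ^ 2 * μ - 2 * a * b * μ * ∑ i, x i + b ^ 2 * ∑ i, ∑ j, A i j := by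
  have h_xx : x ⬝ᵥ x = 1 := by simpa [dotProduct, sq] using hx
  have h_xAx : x ⬝ᵥ (A *ᵥ x) = μ := by rw [hAx, dotProduct_smul, h_xx, smul_eq_mul, mul_one]
  have h_oneAx : 1 ⬝ᵥ (A *ᵥ x) = μ * ∑ i, x i := by simp [hAx, dotProduct, mul_sum]
  have h_xAone : x ⬝ᵥ (A *ᵥ 1) = 1 ⬝ᵥ (A *ᵥ x) := by
    rw [dotProduct_comm, ← vecMul_transpose, hA.eq, dotProduct_mulVec]
  have h_oneAone : 1 ⬝ᵥ (A *ᵥ 1) = ∑ i, ∑ j, A i j := by simp [dotProduct, mulVec]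
  simp only [mulVec_sub, mulVec_smul, dotProduct_sub, sub_dotProduct, dotProduct_smul,
    smul_dotProduct, smul_eq_mul, h_xAx, h_xAone, h_oneAx, h_oneAone]
  ring

end Matrix

namespace SimpleGraph

variable {V : Type*} {G : SimpleGraph V}

noncomputable def distMatrix_s17 (G : SimpleGraph V) : Matrix V V ℝ := .of fun a b => (G.dist a b : ℝ)

lemma isSymm_distMatrix : G.distMatrix_s17.IsSymm :=
  Matrix.IsSymm.ext fun a b => by simp [distMatrix_s17, dist_comm]

lemma Connected.exists_adj_dist_add_one_eq (hG : G.Connected) {i k : V} (hik : i ≠ k) :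
    ∃ j, G.Adj k j ∧ G.dist i j + 1 = G.dist i k := by
  obtain ⟨p, -, hp⟩ := hG.exists_path_of_dist k i
  obtain ⟨j, hkj, q, rfl⟩ := Walk.exists_eq_cons_of_ne hik.symm p
  refine ⟨j, hkj, ?_⟩
  have h_walk : G.dist j i ≤ q.length := dist_le q
  have h_tri := hG.dist_triangle (u := i) (v := j) (w := k)
  rw [Walk.length_cons] at hp
  rw [dist_eq_one_iff_adj.2 hkj.symm] at h_tri
  have := G.dist_comm (u := i) (v := k)
  have := G.dist_comm (u := i) (v := j)
  omega

lemma IsTree.eq_of_adj_of_dist_add_one_eq (hG : G.IsTree) {i k j₁ j₂ : V}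
    (h₁ : G.Adj k j₁) (h₂ : G.Adj k j₂)
    (hd₁ : G.dist i j₁ + 1 = G.dist i k) (hd₂ : G.dist i j₂ + 1 = G.dist i k) : j₁ = j₂ := by
  classical
  obtain ⟨P, hP, -⟩ := hG.connected.exists_path_of_dist i k
  have h_pen : ∀ j, G.Adj k j → G.dist i j + 1 = G.dist i k → j = P.penultimate := by
    intro j hj hd
    obtain ⟨Q, hQ, hQ_len⟩ := hG.connected.exists_path_of_dist i j
    have hk : k ∉ Q.support := fun hk => by
      have := dist_le (Q.takeUntil k hk)
      have := Q.length_takeUntil_le_length hk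
      omega
    exact hG.isAcyclic.eq_penultimate_of_adj_end hP hj
      (hG.isAcyclic.mem_support_of_ne_mem_support_of_adj_of_isPath hP hQ hj hk)
  rw [h_pen j₁ h₁ hd₁, h_pen j₂ h₂ hd₂]

variable [Fintype V]

lemma Connected.card_sub_one_le_sum_dist (hG : G.Connected) (a : V) :
    (Fintype.card V : ℝ) - 1 ≤ ∑ b, (G.dist b a : ℝ) := by
  classical
  have h : ∀ b, (1 : ℝ) - (if b = a then 1 else 0) ≤ G.dist b a := by
    intro b
    split_ifs with hba
    · simp [hba]
    · rw [sub_zero]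
      exact_mod_cast hG.pos_dist_of_ne hba
  calc (Fintype.card V : ℝ) - 1 = ∑ b, ((1 : ℝ) - if b = a then 1 else 0) := by simp
    _ ≤ _ := sum_le_sum fun b _ => h b

variable [DecidableRel G.Adj]

lemma sum_dist_neighborFinset_self (k : V) :
    ∑ j ∈ G.neighborFinset k, G.dist j k = G.degree k := by
  rw [← card_neighborFinset_eq_degree, card_eq_sum_ones]
  exact sum_congr rfl fun j hj => dist_eq_one_iff_adj.2 ((mem_neighborFinset ..).1 hj).symm

lemma IsTree.two_mul_card_sub_one_sq_le_sum_dist (hG : G.IsTree) :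
    2 * ((Fintype.card V : ℝ) - 1) ^ 2 ≤ ∑ a, ∑ b, (G.dist a b : ℝ) := by
  classical
  have h : ∀ a b, (2 : ℝ) - (if a = b then 2 else 0) - (if G.Adj a b then 1 else 0)
      ≤ G.dist a b := by
    intro a b
    split_ifs with hab hadj hadj
    · simp [hab] at hadj
    · simp [hab]
    · norm_num [dist_eq_one_iff_adj.2 hadj]
    · simpa using Nat.cast_le (α := ℝ) |>.2 (hG.connected.one_lt_dist_of_ne_of_not_adj hab hadj)
  have h_deg : ∑ a, (G.degree a : ℝ) = 2 * ((Fintype.card V : ℝ) - 1) := by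
    rw [← hG.card_edgeFinset, ← Nat.cast_sum, G.sum_degrees_eq_twice_card_edges]
    push_cast
    ring
  calc 2 * ((Fintype.card V : ℝ) - 1) ^ 2
      = ∑ a, ∑ b, ((2 : ℝ) - (if a = b then 2 else 0) - (if G.Adj a b then 1 else 0)) := by
        simp only [sum_sub_distrib, sum_ite_eq, mem_univ, if_true, ← degree_eq_sum_if_adj, h_deg]
        simp
        ring
    _ ≤ _ := sum_le_sum fun a _ => sum_le_sum fun b _ => h a b

variable [DecidableEq V]

lemma IsTree.sum_dist_neighborFinset_add_two (hG : G.IsTree) {i k : V} (hik : i ≠ k) :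
    ∑ j ∈ G.neighborFinset k, G.dist i j + 2 = G.degree k * (G.dist i k + 1) := by
  obtain ⟨j₀, hj₀, hd₀⟩ := hG.connected.exists_adj_dist_add_one_eq hik
  have hmem : j₀ ∈ G.neighborFinset k := (mem_neighborFinset ..).2 hj₀
  have h_far : ∀ j ∈ (G.neighborFinset k).erase j₀, G.dist i j = G.dist i k + 1 := by
    intro j hj
    obtain ⟨hne, hj⟩ := mem_erase.1 hj
    rw [mem_neighborFinset] at hj
    exact (hG.dist_eq_dist_add_one_of_adj i hj).resolve_left fun h =>
      hne (hG.eq_of_adj_of_dist_add_one_eq hj hj₀ h.symm hd₀)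
  obtain ⟨m, hm⟩ := Nat.exists_eq_add_one.2 (G.degree_pos_iff_exists_adj k |>.2 ⟨j₀, hj₀⟩)
  rw [← add_sum_erase _ _ hmem, sum_congr rfl h_far, sum_const, card_erase_of_mem hmem,
    card_neighborFinset_eq_degree, hm, smul_eq_mul, Nat.add_sub_cancel, ← hd₀]
  ring

lemma IsTree.lapMatrix_mul_distMatrix_apply (hG : G.IsTree) (k m : V) :
    (G.lapMatrix ℝ * G.distMatrix_s17) k m = 2 - G.degree k - if k = m then 2 else 0 := by
  have h : (G.lapMatrix ℝ * G.distMatrix_s17) k m = (G.lapMatrix ℝ *ᵥ fun j => G.distMatrix_s17 j m) k :=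
    rfl
  rw [h, lapMatrix_mulVec_apply]
  simp only [distMatrix_s17, of_apply]
  split_ifs with hkm
  · subst hkm
    rw [dist_self, ← Nat.cast_sum, sum_dist_neighborFinset_self]
    ring
  · have hsum : ∑ j ∈ G.neighborFinset k, (G.dist j m : ℝ) + 2
        = G.degree k * (G.dist k m + 1) := by
      simp_rw [dist_comm (u := _) (v := m)]
      exact_mod_cast hG.sum_dist_neighborFinset_add_two (Ne.symm hkm)
    linarith

lemma IsTree.lapMatrix_mulVec_distMatrix_mulVec (hG : G.IsTree) {x : V → ℝ}
    (hx : ∑ i, x i = 0) : G.lapMatrix ℝ *ᵥ (G.distMatrix_s17 *ᵥ x) = (-2 : ℝ) • x := by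
  ext k
  rw [mulVec_mulVec]
  simp only [mulVec, dotProduct, hG.lapMatrix_mul_distMatrix_apply, sub_mul,
    ite_mul, zero_mul, sum_sub_distrib, ← mul_sum, hx, sum_ite_eq, mem_univ, if_true]
  simp

theorem IsTree.dotProduct_distMatrix_mulVec_nonpos (hG : G.IsTree) {x : V → ℝ}
    (hx : ∑ i, x i = 0) : x ⬝ᵥ (G.distMatrix_s17 *ᵥ x) ≤ 0 := by
  have hpsd := (G.posSemidef_lapMatrix ℝ).dotProduct_mulVec_nonneg (G.distMatrix_s17 *ᵥ x)
  rw [star_trivial, hG.lapMatrix_mulVec_distMatrix_mulVec hx, dotProduct_smul, dotProduct_comm,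
    smul_eq_mul] at hpsd
  linarith

end SimpleGraph

lemma lt_sq_of_quadratic_form_nonpos {n l lam s S : ℝ} (hn : 2 ≤ n) (hl : l ≤ n)
    (hlam : n - 1 ≤ lam) (hS : 2 * (n - 1) ^ 2 ≤ S)
    (hquad : n ^ 2 * lam - 2 * n * s * lam * s + s ^ 2 * S ≤ 0) :
    n / 2 * (lam / (lam - l + 2)) + (n - l - 1) / (lam - l + 2) < s ^ 2 := by
  have hlam_pos : 0 < lam := by linarith
  have hP : 0 < lam - l + 2 := by linarith
  have hC : 0 < 2 * n * lam - S := by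
    by_contra! h
    nlinarith [mul_nonneg (sq_nonneg s) (sub_nonneg.2 h),
      mul_pos (by positivity : 0 < n ^ 2) hlam_pos]
  have hS0 : 0 ≤ S := le_trans (by positivity) hS
  -- The right side minus the left is `(n - l) (n λ (n - 2) + S) + n λ (S / 2 - n (n - 2) + 2) - S`,
  -- and with `t = S / 2 - (n - 1)²` the last part equals
  -- `(λ - (n - 1)) n (3 + t) + t (n - 2) (n + 1) + (n - 1) (n + 2)`.
  have key : (n * lam / 2 + n - l - 1) * (2 * n * lam - S) < n ^ 2 * lam * (lam - l + 2) := by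
    have h₁ : 0 ≤ (n - l) * (n * lam * (n - 2) + S) :=
      mul_nonneg (by linarith) (add_nonneg (mul_nonneg (by positivity) (by linarith)) hS0)
    have h₂ : 0 ≤ (lam - (n - 1)) * (n * (3 + (S / 2 - (n - 1) ^ 2))) :=
      mul_nonneg (by linarith) (mul_nonneg (by linarith) (by linarith))
    have h₃ : 0 ≤ (S / 2 - (n - 1) ^ 2) * ((n - 2) * (n + 1)) :=
      mul_nonneg (by linarith) (mul_nonneg (by linarith) (by linarith))
    nlinarith
  have h_bound : n * lam / 2 + n - l - 1 < s ^ 2 * (lam - l + 2) := by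
    have h_quad : n ^ 2 * lam ≤ s ^ 2 * (2 * n * lam - S) := by linarith
    refine lt_of_mul_lt_mul_right ?_ hC.le
    calc (n * lam / 2 + n - l - 1) * (2 * n * lam - S) < n ^ 2 * lam * (lam - l + 2) := key
      _ ≤ s ^ 2 * (2 * n * lam - S) * (lam - l + 2) := by gcongr
      _ = s ^ 2 * (lam - l + 2) * (2 * n * lam - S) := by ring
  calc n / 2 * (lam / (lam - l + 2)) + (n - l - 1) / (lam - l + 2)
      = (n * lam / 2 + n - l - 1) / (lam - l + 2) := by ring
    _ < s ^ 2 := (div_lt_iff₀ hP).2 h_bound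

theorem stmt_17_general {V : Type*} [Fintype V] [DecidableEq V]
    (T : SimpleGraph V) [DecidableRel T.Adj]
    (hconn : T.Connected) (hacyc : T.IsAcyclic)
    (hn : 3 ≤ Fintype.card V)
    (D : Matrix V V ℝ) (hD : ∀ a b, D a b = (T.dist a b : ℝ))
    (lam : ℝ) (η : V → ℝ)
    (hη0 : ∀ i, 0 ≤ η i) (hηnorm : ∑ i, (η i) ^ 2 = 1)
    (hηeig : D.mulVec η = lam • η)
    (l : ℝ) (hl : l = ((Finset.univ.filter fun x : V => T.degree x = 1).card : ℝ))
    (n : ℝ) (hn' : n = (Fintype.card V : ℝ)) :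
    (∑ i, η i) ^ 2 > n / 2 * (lam / (lam - l + 2)) + (n - l - 1) / (lam - l + 2) := by
  obtain rfl : D = T.distMatrix_s17 := Matrix.ext hD
  have hT : T.IsTree := ⟨hconn, hacyc⟩
  set s := ∑ i, η i
  have hs : 0 < s := by
    obtain ⟨i, hi⟩ : ∃ i, η i ≠ 0 := by
      by_contra! h
      simp [h] at hηnorm
    exact sum_pos' (fun i _ => hη0 i) ⟨i, mem_univ i, (hη0 i).lt_of_ne' hi⟩
  have hlam : n - 1 ≤ lam := hn' ▸ Matrix.le_of_le_sum_apply_of_mulVec_eq_smul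
    hconn.card_sub_one_le_sum_dist hη0 hs hηeig
  have hneg := hT.dotProduct_distMatrix_mulVec_nonpos (x := n • η - s • 1) <| by
    simp [sum_sub_distrib, ← mul_sum, hn', s]
  rw [SimpleGraph.isSymm_distMatrix.dotProduct_mulVec_smul_sub_smul_one hηeig hηnorm] at hneg
  have hl_le : l ≤ n := hl ▸ hn' ▸ Nat.cast_le.2 (card_filter_le _ _)
  have hn2 : 2 ≤ n := by rw [hn']; exact_mod_cast hn.trans' (by norm_num)
  exact lt_sq_of_quadratic_form_nonpos hn2 hl_le hlam
    (hn' ▸ hT.two_mul_card_sub_one_sq_le_sum_dist) hneg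

/-- Let `T` be a tree on `n ≥ 3` vertices with `l` leaves and distance
matrix `D`, let `λ` be the Perron root of `D` and `η` an entrywise nonnegative unit
eigenvector for `λ`.  Then `⟨η,𝟏⟩² > (n/2)·(λ/(λ−l+2)) + (n−l−1)/(λ−l+2)`. -/
theorem stmt_17 {V : Type*} [Fintype V] [DecidableEq V]
    (T : SimpleGraph V) [DecidableRel T.Adj]
    (hconn : T.Connected) (hacyc : T.IsAcyclic)
    (hn : 3 ≤ Fintype.card V)
    (D : Matrix V V ℝ) (hD : ∀ a b, D a b = (T.dist a b : ℝ))
    (lam : ℝ) (η : V → ℝ)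
    (hη0 : ∀ i, 0 ≤ η i) (hηnorm : ∑ i, (η i) ^ 2 = 1)
    (hηeig : D.mulVec η = lam • η)
    (hmax : ∀ μ : ℝ, (∃ x : V → ℝ, x ≠ 0 ∧ D.mulVec x = μ • x) → μ ≤ lam)
    (l : ℝ) (hl : l = ((Finset.univ.filter fun x : V => T.degree x = 1).card : ℝ))
    (n : ℝ) (hn' : n = (Fintype.card V : ℝ)) :
    (∑ i, η i) ^ 2 > n / 2 * (lam / (lam - l + 2)) + (n - l - 1) / (lam - l + 2) :=
  stmt_17_general T hconn hacyc hn D hD lam η hη0 hηnorm hηeig l hl n hn'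
end
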